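/- arXiv:1805.11157 — 7 statements merged into one kernel-verified Lean document; each statement's English description precedes it below -/
import Mathlib

section
/- Let (X, μ) be a measure space and let p : ℝ^m → X → ℝ be a parametrized family of probability densities (p(θ)(x) > 0 for μ-a.e. x and ∫_X p(θ)(x) dμ = 1 for every θ). Fix θ₀ ∈ ℝ^m and indices j, k. Assume that for μ-a.e. x the map θ ↦ p(θ)(x) has first and second partial derivatives in the j-th and k-th coordinate directions, that differentiation under the integral sign is valid for the function A(θ) = ∫_X p(θ)(x) · ln(p(θ)(x)/p(θ₀)(x)) dμ up to second order at θ₀, and that ∫_X ∂_j p(θ₀)(x) dμ = 0 and ∫_X ∂_j ∂_k p(θ₀)(x) dμ = 0. Then the second partial derivative ∂_j ∂_k A(θ₀) equals the Fisher information matrix entry g_{jk}(θ₀) = ∫_X p(θ₀)(x) · ∂_j ln p(θ)(x)|_{θ₀} · ∂_k ln p(θ)(x)|_{θ₀} dμ. -/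
open MeasureTheory

/-- The Hessian at `θ = θ₀` of the Kullback–Leibler divergence
`A(θ) = D_KL(p(θ) ‖ p(θ₀)) = ∫ p(θ)(x) · ln (p(θ)(x)/p(θ₀)(x)) dμ` equals the
Fisher information matrix entry
`g_{jk}(θ₀) = ∫ p(θ₀)(x) · ∂_j ln p(θ) |_{θ₀} · ∂_k ln p(θ) |_{θ₀} dμ`.

Here `p₁ i θ x` is the `i`-th first partial derivative of `θ ↦ p θ x`, `p₂` is the
mixed second partial `∂_j ∂_k p` at `θ₀`, `A` is the Kullback–Leibler divergence from
`p θ₀`, `dA` is its partial derivative in the `k`-th direction (along the `j`-line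
through `θ₀`), and the hypotheses `hq₁, hDUI₁, hq₂, hDUI₂` express that
differentiation under the integral sign is valid up to second order at `θ₀`.
The conclusion states that the second partial derivative `∂_j ∂_k A (θ₀)`
(i.e. the derivative at `θ₀ j` of `s ↦ (∂_k A)(θ₀ with j-th coordinate s)`)
is the Fisher information matrix entry `g_{jk}(θ₀)`. -/
theorem kl_hessian_eq_fisher_metric
    {X : Type*} [MeasurableSpace X] (μ : Measure X) {m : ℕ}
    (p : (Fin m → ℝ) → X → ℝ)
    -- `p` is a parametrized family of probability densities
    (hppos : ∀ θ : Fin m → ℝ, ∀ᵐ x ∂μ, 0 < p θ x)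
    (hpone : ∀ θ : Fin m → ℝ, ∫ x, p θ x ∂μ = 1)
    (θ₀ : Fin m → ℝ) (j k : Fin m)
    -- for μ-a.e. x, the map θ ↦ p θ x has first partial derivatives `p₁ i θ x` ...
    (p₁ : Fin m → (Fin m → ℝ) → X → ℝ)
    (hp₁ : ∀ᵐ x ∂μ, ∀ (i : Fin m) (θ : Fin m → ℝ),
      HasDerivAt (fun s => p (Function.update θ i s) x) (p₁ i θ x) (θ i))
    -- ... and the mixed second partial derivative `∂_j ∂_k p = p₂` at θ₀
    (p₂ : X → ℝ)
    (hp₂ : ∀ᵐ x ∂μ, HasDerivAt (fun s => p₁ k (Function.update θ₀ j s) x) (p₂ x) (θ₀ j))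
    -- `A θ = D_KL(p θ ‖ p θ₀)`, and `dA = ∂_k A` along the j-line through θ₀
    (A dA : (Fin m → ℝ) → ℝ)
    (hA : ∀ θ, A θ = ∫ x, p θ x * Real.log (p θ x / p θ₀ x) ∂μ)
    (hdA : ∀ s : ℝ, HasDerivAt
      (fun t => A (Function.update (Function.update θ₀ j s) k t))
      (dA (Function.update θ₀ j s)) (Function.update θ₀ j s k))
    -- differentiation under the integral sign is valid to first order ...
    (q₁ : ℝ → X → ℝ)
    (hq₁ : ∀ᵐ x ∂μ, ∀ s : ℝ, HasDerivAt
      (fun t => p (Function.update (Function.update θ₀ j s) k t) x *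
        Real.log (p (Function.update (Function.update θ₀ j s) k t) x / p θ₀ x))
      (q₁ s x) (Function.update θ₀ j s k))
    (hDUI₁ : ∀ s : ℝ, dA (Function.update θ₀ j s) = ∫ x, q₁ s x ∂μ)
    -- ... and to second order at θ₀
    (q₂ : X → ℝ)
    (hq₂ : ∀ᵐ x ∂μ, HasDerivAt (fun s => q₁ s x) (q₂ x) (θ₀ j))
    (hDUI₂ : HasDerivAt (fun s => ∫ x, q₁ s x ∂μ) (∫ x, q₂ x ∂μ) (θ₀ j))
    -- the integrals of the derivatives of `p` vanish at θ₀
    (hvan₁ : ∫ x, p₁ j θ₀ x ∂μ = 0)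
    (hvan₂ : ∫ x, p₂ x ∂μ = 0)
    -- (integrability of the pieces)
    (hint₂ : Integrable p₂ μ)
    (hfish : Integrable
      (fun x => p θ₀ x * ((p₁ j θ₀ x / p θ₀ x) * (p₁ k θ₀ x / p θ₀ x))) μ) :
    HasDerivAt (fun s => dA (Function.update θ₀ j s))
      (∫ x, p θ₀ x * ((p₁ j θ₀ x / p θ₀ x) * (p₁ k θ₀ x / p θ₀ x)) ∂μ)
      (θ₀ j) := by

  -- identify `q₂` almost everywhere
  have hae : ∀ᵐ x ∂μ, q₂ x =
      p₂ x + p θ₀ x * ((p₁ j θ₀ x / p θ₀ x) * (p₁ k θ₀ x / p θ₀ x)) := by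
    filter_upwards [hppos θ₀, hp₁, hp₂, hq₁, hq₂] with x hx0 hx1 hx2 hx3 hx4
    have hcne : p θ₀ x ≠ 0 := ne_of_gt hx0
    have hcont : ContinuousAt (fun s => p (Function.update θ₀ j s) x) (θ₀ j) :=
      (hx1 j θ₀).continuousAt
    have hpos : ∀ᶠ s in nhds (θ₀ j), 0 < p (Function.update θ₀ j s) x := by
      have h0 : (0:ℝ) < p (Function.update θ₀ j (θ₀ j)) x := by
        rwa [Function.update_eq_self]
      exact hcont (Ioi_mem_nhds h0)
    -- identify `q₁` near `θ₀ j`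
    have hq1eq : ∀ᶠ s in nhds (θ₀ j), q₁ s x =
        p₁ k (Function.update θ₀ j s) x *
          (Real.log (p (Function.update θ₀ j s) x / p θ₀ x) + 1) := by
      filter_upwards [hpos] with s hs
      set θs := Function.update θ₀ j s with hθs
      have hvne : p θs x ≠ 0 := ne_of_gt hs
      have hd : HasDerivAt (fun t => p (Function.update θs k t) x) (p₁ k θs x) (θs k) :=
        hx1 k θs
      have hps : p (Function.update θs k (θs k)) x = p θs x := by
        rw [Function.update_eq_self]
      have hlog : HasDerivAt (fun t => Real.log (p (Function.update θs k t) x / p θ₀ x))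
          ((p₁ k θs x / p θ₀ x) / (p (Function.update θs k (θs k)) x / p θ₀ x)) (θs k) :=
        (hd.div_const (p θ₀ x)).log (by rw [hps]; exact div_ne_zero hvne hcne)
      have hmul := hd.mul hlog
      have huniq := (hx3 s).unique hmul
      rw [huniq, hps]
      field_simp
    -- differentiate the explicit formula for `q₁`
    have hdj : HasDerivAt (fun s => p (Function.update θ₀ j s) x) (p₁ j θ₀ x) (θ₀ j) :=
      hx1 j θ₀
    have hp0 : p (Function.update θ₀ j (θ₀ j)) x = p θ₀ x := by
      rw [Function.update_eq_self]
    have hlog2 : HasDerivAt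
        (fun s => Real.log (p (Function.update θ₀ j s) x / p θ₀ x) + 1)
        ((p₁ j θ₀ x / p θ₀ x) / (p (Function.update θ₀ j (θ₀ j)) x / p θ₀ x)) (θ₀ j) :=
      ((hdj.div_const (p θ₀ x)).log (by rw [hp0]; exact div_ne_zero hcne hcne)).add_const 1
    have hg := hx2.mul hlog2
    have hq : HasDerivAt (fun s => q₁ s x)
        (p₂ x * (Real.log (p (Function.update θ₀ j (θ₀ j)) x / p θ₀ x) + 1)
          + p₁ k (Function.update θ₀ j (θ₀ j)) x *
            ((p₁ j θ₀ x / p θ₀ x) / (p (Function.update θ₀ j (θ₀ j)) x / p θ₀ x)))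
        (θ₀ j) :=
      hg.congr_of_eventuallyEq hq1eq
    have huniq2 := hx4.unique hq
    rw [huniq2, hp0, Function.update_eq_self, div_self hcne, Real.log_one]
    field_simp
    ring
  have key : ∫ x, q₂ x ∂μ =
      ∫ x, p θ₀ x * ((p₁ j θ₀ x / p θ₀ x) * (p₁ k θ₀ x / p θ₀ x)) ∂μ := by
    rw [integral_congr_ae hae, integral_add hint₂ hfish, hvan₂, zero_add]
  have hfun : (fun s => dA (Function.update θ₀ j s)) = fun s => ∫ x, q₁ s x ∂μ :=
    funext hDUI₁
  rw [hfun, ← key]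
  exact hDUI₂
end

section
/- Let G : ℝ → ℝ be differentiable with G(0) = 0, let (X, μ) be a measure space, and let p : ℝ^m → X → ℝ be a parametrized family of probability densities with p(θ)(x) > 0 μ-a.e. and ∫_X p(θ)(x) dμ = 1 for every θ. Fix θ₀ ∈ ℝ^m and an index k. Assume that for μ-a.e. x the map θ ↦ p(θ)(x) has a partial derivative in the k-th direction, that differentiation under the integral sign is valid at θ₀ for A(θ) = D_G(p(θ)‖p(θ₀)) = ∫_X p(θ)(x) G(ln(p(θ)(x)/p(θ₀)(x))) dμ, and that ∫_X ∂_k p(θ₀)(x) dμ = 0. Then ∂_k A(θ₀) = 0, i.e., the gradient of the relative entropy group with respect to θ vanishes at θ = θ₀. -/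
open MeasureTheory

/-!
At `θ = θ₀` the log-ratio `ln (p θ / p θ₀)` vanishes, so differentiating the integrand
`p θ · G (ln (p θ / p θ₀))` gives `∂ₖp · G 0 + p · G'(0) · ∂ₖp / p = G'(0) · ∂ₖp`.
Integrating, the derivative of `A` is `G'(0) · ∫ ∂ₖp = 0`.
-/

theorem hasDerivAt_mul_comp_log_div_self {f : ℝ → ℝ} {f' t : ℝ} {G : ℝ → ℝ}
    (hG0 : G 0 = 0) (hG : DifferentiableAt ℝ G 0) (hf : HasDerivAt f f' t) (hft : f t ≠ 0) :
    HasDerivAt (fun s => f s * G (Real.log (f s / f t))) (deriv G 0 * f') t := by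
  have hratio : f t / f t = 1 := div_self hft
  have hlog : HasDerivAt (fun s => Real.log (f s / f t)) (f' / f t) t := by
    simpa [hratio] using (hf.div_const (f t)).log (by rw [hratio]; exact one_ne_zero)
  have hG' : HasDerivAt G (deriv G 0) (Real.log (f t / f t)) := by
    rw [hratio, Real.log_one]
    exact hG.hasDerivAt
  refine (hf.mul (hG'.comp t hlog)).congr_deriv ?_
  rw [Function.comp_apply, hratio, Real.log_one, hG0]
  field_simp
  ring

theorem relative_entropy_group_grad_vanishes_general
    {X : Type*} [MeasurableSpace X] (μ : Measure X) {m : ℕ}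
    (G : ℝ → ℝ) (hG0 : G 0 = 0) (hGdiff : Differentiable ℝ G)
    (p : (Fin m → ℝ) → X → ℝ)
    -- `p` is a parametrized family of probability densities
    (hppos : ∀ θ : Fin m → ℝ, ∀ᵐ x ∂μ, 0 < p θ x)
    (θ₀ : Fin m → ℝ) (k : Fin m)
    -- for μ-a.e. x, the map θ ↦ p θ x has a `k`-th partial derivative at θ₀
    (p₁k : X → ℝ)
    (hp₁k : ∀ᵐ x ∂μ,
      HasDerivAt (fun s => p (Function.update θ₀ k s) x) (p₁k x) (θ₀ k))
    (A : (Fin m → ℝ) → ℝ)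
    -- differentiation under the integral sign is valid at θ₀
    (q : X → ℝ)
    (hq : ∀ᵐ x ∂μ, HasDerivAt
      (fun s => p (Function.update θ₀ k s) x *
        G (Real.log (p (Function.update θ₀ k s) x / p θ₀ x)))
      (q x) (θ₀ k))
    (hDUI : HasDerivAt (fun s => A (Function.update θ₀ k s)) (∫ x, q x ∂μ) (θ₀ k))
    -- the integral of the `k`-th partial derivative of `p` vanishes at θ₀
    (hvan : ∫ x, p₁k x ∂μ = 0) :
    HasDerivAt (fun s => A (Function.update θ₀ k s)) 0 (θ₀ k) := by
  have hq_eq : q =ᵐ[μ] fun x => deriv G 0 * p₁k x := by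
    filter_upwards [hq, hp₁k, hppos θ₀] with x hqx hpx hpos
    have hderiv := hasDerivAt_mul_comp_log_div_self hG0 (hGdiff 0) hpx
      (by rw [Function.update_eq_self]; exact hpos.ne')
    rw [Function.update_eq_self] at hderiv
    exact hqx.unique hderiv
  rwa [integral_congr_ae hq_eq, integral_const_mul, hvan, mul_zero] at hDUI

/-- The gradient of the relative entropy group
`A(θ) = D_G(p(θ) ‖ p(θ₀)) = ∫ p(θ)(x) · G(ln (p(θ)(x)/p(θ₀)(x))) dμ`
with respect to `θ` vanishes at `θ = θ₀`: its `k`-th partial derivative at `θ₀` is `0`.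

Here `p₁k` is the `k`-th partial derivative of `θ ↦ p θ x` at `θ₀` (μ-a.e.), and the
hypotheses `hq, hDUI` express that differentiation under the integral sign is valid
at `θ₀` for `A`. -/
theorem relative_entropy_group_grad_vanishes
    {X : Type*} [MeasurableSpace X] (μ : Measure X) {m : ℕ}
    (G : ℝ → ℝ) (hG0 : G 0 = 0) (hGdiff : Differentiable ℝ G)
    (p : (Fin m → ℝ) → X → ℝ)
    -- `p` is a parametrized family of probability densities
    (hppos : ∀ θ : Fin m → ℝ, ∀ᵐ x ∂μ, 0 < p θ x)
    (hpone : ∀ θ : Fin m → ℝ, ∫ x, p θ x ∂μ = 1)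
    (θ₀ : Fin m → ℝ) (k : Fin m)
    -- for μ-a.e. x, the map θ ↦ p θ x has a `k`-th partial derivative at θ₀
    (p₁k : X → ℝ)
    (hp₁k : ∀ᵐ x ∂μ,
      HasDerivAt (fun s => p (Function.update θ₀ k s) x) (p₁k x) (θ₀ k))
    -- `A θ = D_G(p θ ‖ p θ₀)`
    (A : (Fin m → ℝ) → ℝ)
    (hA : ∀ θ, A θ = ∫ x, p θ x * G (Real.log (p θ x / p θ₀ x)) ∂μ)
    -- differentiation under the integral sign is valid at θ₀
    (q : X → ℝ)
    (hq : ∀ᵐ x ∂μ, HasDerivAt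
      (fun s => p (Function.update θ₀ k s) x *
        G (Real.log (p (Function.update θ₀ k s) x / p θ₀ x)))
      (q x) (θ₀ k))
    (hDUI : HasDerivAt (fun s => A (Function.update θ₀ k s)) (∫ x, q x ∂μ) (θ₀ k))
    -- the integral of the `k`-th partial derivative of `p` vanishes at θ₀
    (hvan : ∫ x, p₁k x ∂μ = 0) :
    HasDerivAt (fun s => A (Function.update θ₀ k s)) 0 (θ₀ k) :=
  relative_entropy_group_grad_vanishes_general μ G hG0 hGdiff p hppos θ₀ k p₁k hp₁k A q hq hDUI hvan
end

section
/- Let G : ℝ → ℝ be twice differentiable with G(0) = 0, let (X, μ) be a measure space, and let p : ℝ^m → X → ℝ be a parametrized family of probability densities with p(θ)(x) > 0 μ-a.e. and ∫_X p(θ)(x) dμ = 1 for every θ. Fix θ₀ ∈ ℝ^m and indices j, k. Assume that for μ-a.e. x the map θ ↦ p(θ)(x) has first and second partial derivatives in the j-th and k-th directions, that differentiation under the integral sign is valid up to second order at θ₀ for A(θ) = D_G(p(θ)‖p(θ₀)) = ∫_X p(θ)(x) G(ln(p(θ)(x)/p(θ₀)(x))) dμ, and that ∫_X ∂_j p(θ₀)(x)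 dμ = 0 and ∫_X ∂_j ∂_k p(θ₀)(x) dμ = 0. Then the Hessian entry ∂_j ∂_k A(θ₀) equals (G'(0) + G''(0)) · g_{jk}(θ₀), where g_{jk}(θ₀) = ∫_X p(θ₀)(x) · ∂_j ln p(θ)(x)|_{θ₀} · ∂_k ln p(θ)(x)|_{θ₀} dμ is the standard Fisher information matrix. In other words, the Fisher metric group is the standard Fisher metric multiplied by the factor G'(0) + G''(0). -/
/-!
Differentiating `p G(ln (p / p(θ₀)))` once in `θᵏ` gives `∂ₖp · (G + G')(ln (p / p(θ₀)))`.
Differentiating again in `θʲ` at `θ₀`, where the log-ratio vanishes, gives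
`G'(0) ∂ⱼ∂ₖp + (G'(0) + G''(0)) ∂ⱼp ∂ₖp / p`. After integration the first term drops out
because `∫ ∂ⱼ∂ₖp = 0`, and the second is the Fisher metric.
-/

open MeasureTheory Topology Real Function

theorem HasDerivAt.log_div_const {f : ℝ → ℝ} {f' t c : ℝ} (hf : HasDerivAt f f' t)
    (hft : f t ≠ 0) (hc : c ≠ 0) :
    HasDerivAt (fun t => Real.log (f t / c)) (f' / f t) t := by
  convert (hf.div_const c).log (div_ne_zero hft hc) using 1
  field_simp

theorem HasDerivAt.mul_comp_log_div_const {f G : ℝ → ℝ} {f' t c G' : ℝ}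
    (hf : HasDerivAt f f' t) (hft : f t ≠ 0) (hc : c ≠ 0)
    (hG : HasDerivAt G G' (Real.log (f t / c))) :
    HasDerivAt (fun t => f t * G (Real.log (f t / c)))
      (f' * (G (Real.log (f t / c)) + G')) t := by
  refine (hf.mul (hG.comp t (hf.log_div_const hft hc))).congr_deriv ?_
  simp only [comp_apply]
  field_simp

section RelEntropyIntegrand

variable {m : ℕ} {G : ℝ → ℝ} {P : (Fin m → ℝ) → ℝ} {P₁ : Fin m → (Fin m → ℝ) → ℝ}
  {θ₀ : Fin m → ℝ} {j k : Fin m} {Q₁ : ℝ → ℝ}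

theorem relEntropyIntegrand_partial_eventuallyEq (hG : Differentiable ℝ G)
    (hP₀ : P θ₀ ≠ 0)
    (hP₁ : ∀ (i : Fin m) (θ : Fin m → ℝ),
      HasDerivAt (fun s => P (update θ i s)) (P₁ i θ) (θ i))
    (hQ₁ : ∀ s : ℝ, HasDerivAt
      (fun t => P (update (update θ₀ j s) k t) *
        G (log (P (update (update θ₀ j s) k t) / P θ₀)))
      (Q₁ s) (update θ₀ j s k)) :
    ∀ᶠ s in 𝓝 (θ₀ j), Q₁ s = P₁ k (update θ₀ j s) *
      (G (log (P (update θ₀ j s) / P θ₀)) + deriv G (log (P (update θ₀ j s) / P θ₀))) := by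
  have hP_ne : ∀ᶠ s in 𝓝 (θ₀ j), P (update θ₀ j s) ≠ 0 :=
    (hP₁ j θ₀).continuousAt.eventually_ne (by rwa [update_eq_self])
  filter_upwards [hP_ne] with s hs
  have hderiv := (hP₁ k (update θ₀ j s)).mul_comp_log_div_const (by rwa [update_eq_self]) hP₀
    (hG _).hasDerivAt
  rw [update_eq_self] at hderiv
  exact (hQ₁ s).unique hderiv

theorem relEntropyIntegrand_mixedPartial_eq {P₂ Q₂ : ℝ} (hG0 : G 0 = 0)
    (hG : Differentiable ℝ G) (hG' : Differentiable ℝ (deriv G)) (hP₀ : P θ₀ ≠ 0)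
    (hP₁ : ∀ (i : Fin m) (θ : Fin m → ℝ),
      HasDerivAt (fun s => P (update θ i s)) (P₁ i θ) (θ i))
    (hP₂ : HasDerivAt (fun s => P₁ k (update θ₀ j s)) P₂ (θ₀ j))
    (hQ₁ : ∀ s : ℝ, HasDerivAt
      (fun t => P (update (update θ₀ j s) k t) *
        G (log (P (update (update θ₀ j s) k t) / P θ₀)))
      (Q₁ s) (update θ₀ j s k))
    (hQ₂ : HasDerivAt Q₁ Q₂ (θ₀ j)) :
    Q₂ = deriv G 0 * P₂ +
      (deriv G 0 + deriv (deriv G) 0) * (P θ₀ * ((P₁ j θ₀ / P θ₀) * (P₁ k θ₀ / P θ₀))) := by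
  have hlog := (hP₁ j θ₀).log_div_const (by rwa [update_eq_self]) hP₀
  have hlog_zero : 0 = log (P (update θ₀ j (θ₀ j)) / P θ₀) := by
    rw [update_eq_self, div_self hP₀, log_one]
  have hderiv := hP₂.mul (((hG 0).hasDerivAt.comp_of_eq _ hlog hlog_zero).add
    ((hG' 0).hasDerivAt.comp_of_eq _ hlog hlog_zero))
  rw [hQ₂.unique (hderiv.congr_of_eventuallyEq
    (relEntropyIntegrand_partial_eventuallyEq hG hP₀ hP₁ hQ₁))]
  simp only [Pi.add_apply, comp_apply, update_eq_self, div_self hP₀, log_one, hG0]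
  field_simp
  ring

end RelEntropyIntegrand

theorem fisher_metric_group_general
    {X : Type*} [MeasurableSpace X] (μ : Measure X) {m : ℕ}
    (G : ℝ → ℝ) (hG0 : G 0 = 0)
    (hGdiff : Differentiable ℝ G) (hGdiff2 : Differentiable ℝ (deriv G))
    (p : (Fin m → ℝ) → X → ℝ)
    -- `p` is a parametrized family of probability densities
    (hppos : ∀ θ : Fin m → ℝ, ∀ᵐ x ∂μ, 0 < p θ x)
    (θ₀ : Fin m → ℝ) (j k : Fin m)
    -- for μ-a.e. x, the map θ ↦ p θ x has first partial derivatives `p₁ i θ x` ...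
    (p₁ : Fin m → (Fin m → ℝ) → X → ℝ)
    (hp₁ : ∀ᵐ x ∂μ, ∀ (i : Fin m) (θ : Fin m → ℝ),
      HasDerivAt (fun s => p (Function.update θ i s) x) (p₁ i θ x) (θ i))
    -- ... and the mixed second partial derivative `∂_j ∂_k p = p₂` at θ₀
    (p₂ : X → ℝ)
    (hp₂ : ∀ᵐ x ∂μ, HasDerivAt (fun s => p₁ k (Function.update θ₀ j s) x) (p₂ x) (θ₀ j))
    -- `A θ = D_G(p θ ‖ p θ₀)`, and `dA = ∂_k A` along the j-line through θ₀
    (dA : (Fin m → ℝ) → ℝ)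
    -- differentiation under the integral sign is valid to first order ...
    (q₁ : ℝ → X → ℝ)
    (hq₁ : ∀ᵐ x ∂μ, ∀ s : ℝ, HasDerivAt
      (fun t => p (Function.update (Function.update θ₀ j s) k t) x *
        G (Real.log (p (Function.update (Function.update θ₀ j s) k t) x / p θ₀ x)))
      (q₁ s x) (Function.update θ₀ j s k))
    (hDUI₁ : ∀ s : ℝ, dA (Function.update θ₀ j s) = ∫ x, q₁ s x ∂μ)
    -- ... and to second order at θ₀
    (q₂ : X → ℝ)
    (hq₂ : ∀ᵐ x ∂μ, HasDerivAt (fun s => q₁ s x) (q₂ x) (θ₀ j))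
    (hDUI₂ : HasDerivAt (fun s => ∫ x, q₁ s x ∂μ) (∫ x, q₂ x ∂μ) (θ₀ j))
    -- the integrals of the derivatives of `p` vanish at θ₀
    (hvan₂ : ∫ x, p₂ x ∂μ = 0)
    -- (integrability of the pieces)
    (hint₂ : Integrable p₂ μ)
    (hfish : Integrable
      (fun x => p θ₀ x * ((p₁ j θ₀ x / p θ₀ x) * (p₁ k θ₀ x / p θ₀ x))) μ) :
    HasDerivAt (fun s => dA (Function.update θ₀ j s))
      ((deriv G 0 + deriv (deriv G) 0) *
        ∫ x, p θ₀ x * ((p₁ j θ₀ x / p θ₀ x) * (p₁ k θ₀ x / p θ₀ x)) ∂μ)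
      (θ₀ j) := by
  have hq₂_eq : ∀ᵐ x ∂μ, q₂ x = deriv G 0 * p₂ x + (deriv G 0 + deriv (deriv G) 0) *
      (p θ₀ x * ((p₁ j θ₀ x / p θ₀ x) * (p₁ k θ₀ x / p θ₀ x))) := by
    filter_upwards [hp₁, hp₂, hq₁, hq₂, hppos θ₀] with x hx₁ hx₂ hxq₁ hxq₂ hx₀
    exact relEntropyIntegrand_mixedPartial_eq (P := fun θ => p θ x) hG0 hGdiff hGdiff2
      hx₀.ne' hx₁ hx₂ hxq₁ hxq₂
  have hintegral_q₂ : ∫ x, q₂ x ∂μ = (deriv G 0 + deriv (deriv G) 0) *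
      ∫ x, p θ₀ x * ((p₁ j θ₀ x / p θ₀ x) * (p₁ k θ₀ x / p θ₀ x)) ∂μ := by
    rw [integral_congr_ae hq₂_eq, integral_add (hint₂.const_mul _) (hfish.const_mul _),
      integral_const_mul, integral_const_mul, hvan₂, mul_zero, zero_add]
  rw [funext hDUI₁, ← hintegral_q₂]
  exact hDUI₂

/-- (Fisher metric group.) The Hessian at `θ = θ₀` of the relative
entropy group `A(θ) = D_G(p(θ) ‖ p(θ₀)) = ∫ p(θ)(x) · G(ln (p(θ)(x)/p(θ₀)(x))) dμ`
equals `(G'(0) + G''(0)) · g_{jk}(θ₀)`, where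
`g_{jk}(θ₀) = ∫ p(θ₀)(x) · ∂_j ln p(θ) |_{θ₀} · ∂_k ln p(θ) |_{θ₀} dμ` is the
standard Fisher information matrix: the Fisher metric group is the standard
Fisher metric multiplied by the factor `G'(0) + G''(0)`.

Here `p₁ i θ x` is the `i`-th first partial derivative of `θ ↦ p θ x`, `p₂` is the
mixed second partial `∂_j ∂_k p` at `θ₀`, `dA` is the partial derivative of `A` in
the `k`-th direction (along the `j`-line through `θ₀`), and the hypotheses
`hq₁, hDUI₁, hq₂, hDUI₂` express that differentiation under the integral sign is
valid up to second order at `θ₀`. -/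
theorem fisher_metric_group
    {X : Type*} [MeasurableSpace X] (μ : Measure X) {m : ℕ}
    (G : ℝ → ℝ) (hG0 : G 0 = 0)
    (hGdiff : Differentiable ℝ G) (hGdiff2 : Differentiable ℝ (deriv G))
    (p : (Fin m → ℝ) → X → ℝ)
    -- `p` is a parametrized family of probability densities
    (hppos : ∀ θ : Fin m → ℝ, ∀ᵐ x ∂μ, 0 < p θ x)
    (hpone : ∀ θ : Fin m → ℝ, ∫ x, p θ x ∂μ = 1)
    (θ₀ : Fin m → ℝ) (j k : Fin m)
    -- for μ-a.e. x, the map θ ↦ p θ x has first partial derivatives `p₁ i θ x` ...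
    (p₁ : Fin m → (Fin m → ℝ) → X → ℝ)
    (hp₁ : ∀ᵐ x ∂μ, ∀ (i : Fin m) (θ : Fin m → ℝ),
      HasDerivAt (fun s => p (Function.update θ i s) x) (p₁ i θ x) (θ i))
    -- ... and the mixed second partial derivative `∂_j ∂_k p = p₂` at θ₀
    (p₂ : X → ℝ)
    (hp₂ : ∀ᵐ x ∂μ, HasDerivAt (fun s => p₁ k (Function.update θ₀ j s) x) (p₂ x) (θ₀ j))
    -- `A θ = D_G(p θ ‖ p θ₀)`, and `dA = ∂_k A` along the j-line through θ₀
    (A dA : (Fin m → ℝ) → ℝ)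
    (hA : ∀ θ, A θ = ∫ x, p θ x * G (Real.log (p θ x / p θ₀ x)) ∂μ)
    (hdA : ∀ s : ℝ, HasDerivAt
      (fun t => A (Function.update (Function.update θ₀ j s) k t))
      (dA (Function.update θ₀ j s)) (Function.update θ₀ j s k))
    -- differentiation under the integral sign is valid to first order ...
    (q₁ : ℝ → X → ℝ)
    (hq₁ : ∀ᵐ x ∂μ, ∀ s : ℝ, HasDerivAt
      (fun t => p (Function.update (Function.update θ₀ j s) k t) x *
        G (Real.log (p (Function.update (Function.update θ₀ j s) k t) x / p θ₀ x)))
      (q₁ s x) (Function.update θ₀ j s k))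
    (hDUI₁ : ∀ s : ℝ, dA (Function.update θ₀ j s) = ∫ x, q₁ s x ∂μ)
    -- ... and to second order at θ₀
    (q₂ : X → ℝ)
    (hq₂ : ∀ᵐ x ∂μ, HasDerivAt (fun s => q₁ s x) (q₂ x) (θ₀ j))
    (hDUI₂ : HasDerivAt (fun s => ∫ x, q₁ s x ∂μ) (∫ x, q₂ x ∂μ) (θ₀ j))
    -- the integrals of the derivatives of `p` vanish at θ₀
    (hvan₁ : ∫ x, p₁ j θ₀ x ∂μ = 0)
    (hvan₂ : ∫ x, p₂ x ∂μ = 0)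
    -- (integrability of the pieces)
    (hint₂ : Integrable p₂ μ)
    (hfish : Integrable
      (fun x => p θ₀ x * ((p₁ j θ₀ x / p θ₀ x) * (p₁ k θ₀ x / p θ₀ x))) μ) :
    HasDerivAt (fun s => dA (Function.update θ₀ j s))
      ((deriv G 0 + deriv (deriv G) 0) *
        ∫ x, p θ₀ x * ((p₁ j θ₀ x / p θ₀ x) * (p₁ k θ₀ x / p θ₀ x)) ∂μ)
      (θ₀ j) :=
  fisher_metric_group_general μ G hG0 hGdiff hGdiff2 p hppos θ₀ j k p₁ hp₁ p₂ hp₂ dA q₁ hq₁ hDUI₁ q₂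
    hq₂ hDUI₂ hvan₂ hint₂ hfish
end

section
/- Let q ≠ 1 be a real number and let G_T(t) = (e^{(1−q)t} − 1)/(1 − q) be the Tsallis group exponential. Under the same hypotheses as in the Fisher metric group theorem (p : ℝ^m → X → ℝ a positive parametrized family of probability densities, differentiation under the integral sign valid up to second order at θ₀ for A(θ) = ∫_X p(θ)(x) G_T(ln(p(θ)(x)/p(θ₀)(x))) dμ, and ∫_X ∂_j p(θ₀) dμ = 0 = ∫_X ∂_j ∂_k p(θ₀) dμ), the Hessian entry ∂_j ∂_k A(θ₀) equals (2 − q) · g_{jk}(θ₀), where g_{jk}(θ₀) is the standard Fisher information matrix; in particular G_T'(0) = 1 and G_T''(0) = 1 − q. -/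
/-!
Write `L = log (p θ / p θ₀)`. Differentiating `p θ · G L` once gives `∂_k p · (G L + G' L)`, since
`∂_k L = ∂_k p / p`. Differentiating again and evaluating at `θ₀`, where `L = 0`, gives
`∂_j ∂_k p · (G 0 + G' 0) + (G' 0 + G'' 0) · ∂_j p ∂_k p / p θ₀`. The first term integrates to zero,
and for the Tsallis exponential `G 0 = 0`, `G' 0 = 1` and `G'' 0 = 1 - q`.
-/

open MeasureTheory Filter Topology

noncomputable section

def tsallisGroupExp (q t : ℝ) : ℝ := (Real.exp ((1 - q) * t) - 1) / (1 - q)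

theorem hasDerivAt_tsallisGroupExp {q : ℝ} (hq : q ≠ 1) (t : ℝ) :
    HasDerivAt (tsallisGroupExp q) (Real.exp ((1 - q) * t)) t := by
  have h := ((((hasDerivAt_id' t).const_mul (1 - q)).exp).sub_const 1).div_const (1 - q)
  refine h.congr_deriv ?_
  field_simp [sub_ne_zero.mpr hq.symm]

theorem deriv_tsallisGroupExp {q : ℝ} (hq : q ≠ 1) :
    deriv (tsallisGroupExp q) = fun t => Real.exp ((1 - q) * t) :=
  funext fun t => (hasDerivAt_tsallisGroupExp hq t).deriv

theorem hasDerivAt_exp_const_mul_zero (c : ℝ) :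
    HasDerivAt (fun t => Real.exp (c * t)) c 0 := by
  simpa using ((hasDerivAt_id (0 : ℝ)).const_mul c).exp

section RelEntropyIntegrand

variable {G G' : ℝ → ℝ}

theorem HasDerivAt.mul_comp_log_div {f : ℝ → ℝ} {f' t c g : ℝ} (hf : HasDerivAt f f' t)
    (hft : f t ≠ 0) (hc : c ≠ 0) (hG : HasDerivAt G g (Real.log (f t / c))) :
    HasDerivAt (fun t => f t * G (Real.log (f t / c))) (f' * (G (Real.log (f t / c)) + g)) t := by
  have hL := (hf.div_const c).log (div_ne_zero hft hc)
  refine (hf.mul (hG.comp t hL)).congr_deriv ?_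
  simp only [Function.comp_apply]
  field_simp

theorem HasDerivAt.mul_comp_log_div_add_of_eq {P R : ℝ → ℝ} {a r s₀ c G₂ : ℝ}
    (hP : HasDerivAt P a s₀) (hPc : P s₀ = c) (hc : c ≠ 0) (hR : HasDerivAt R r s₀)
    (hG : HasDerivAt G (G' 0) 0) (hG' : HasDerivAt G' G₂ 0) :
    HasDerivAt (fun s => R s * (G (Real.log (P s / c)) + G' (Real.log (P s / c))))
      (r * (G 0 + G' 0) + (G' 0 + G₂) * (c * ((a / c) * (R s₀ / c)))) s₀ := by
  have hL0 : Real.log (P s₀ / c) = 0 := by rw [hPc, div_self hc, Real.log_one]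
  have hL := (hP.div_const c).log (by rw [hPc, div_self hc]; exact one_ne_zero)
  rw [← hL0] at hG hG'
  refine (hR.mul ((hG.comp s₀ hL).add (hG'.comp s₀ hL))).congr_deriv ?_
  simp only [Pi.add_apply, Function.comp_apply, hL0]
  rw [hPc]
  field_simp

theorem relEntropyIntegrand_second_partial_eq {m : ℕ} (hG : ∀ t, HasDerivAt G (G' t) t) {G₂ : ℝ}
    (hG' : HasDerivAt G' G₂ 0) {p : (Fin m → ℝ) → ℝ} {p₁ : Fin m → (Fin m → ℝ) → ℝ}
    (hp₁ : ∀ i θ, HasDerivAt (fun s => p (Function.update θ i s)) (p₁ i θ) (θ i))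
    {θ₀ : Fin m → ℝ} (hpos : 0 < p θ₀) {j k : Fin m} {p₂ : ℝ}
    (hp₂ : HasDerivAt (fun s => p₁ k (Function.update θ₀ j s)) p₂ (θ₀ j)) {q₁ : ℝ → ℝ}
    (hq₁ : ∀ s, HasDerivAt (fun t => p (Function.update (Function.update θ₀ j s) k t) *
      G (Real.log (p (Function.update (Function.update θ₀ j s) k t) / p θ₀)))
      (q₁ s) (Function.update θ₀ j s k))
    {q₂ : ℝ} (hq₂ : HasDerivAt q₁ q₂ (θ₀ j)) :
    q₂ = p₂ * (G 0 + G' 0) + (G' 0 + G₂) * (p θ₀ * ((p₁ j θ₀ / p θ₀) * (p₁ k θ₀ / p θ₀))) := by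
  have hpj := hp₁ j θ₀
  -- `p` stays positive near `θ₀` on the `j`-line, where `q₁` therefore has a closed form
  have hposNear : ∀ᶠ s in 𝓝 (θ₀ j), 0 < p (Function.update θ₀ j s) :=
    continuousAt_const.eventually_lt hpj.continuousAt (by simpa using hpos)
  have hq₁Near : q₁ =ᶠ[𝓝 (θ₀ j)] fun s => p₁ k (Function.update θ₀ j s) *
      (G (Real.log (p (Function.update θ₀ j s) / p θ₀)) +
        G' (Real.log (p (Function.update θ₀ j s) / p θ₀))) := by
    filter_upwards [hposNear] with s hs
    have hpk := hp₁ k (Function.update θ₀ j s)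
    rw [(hq₁ s).unique (hpk.mul_comp_log_div (by simpa using hs.ne') hpos.ne' (hG _)),
      Function.update_eq_self]
  have h := hpj.mul_comp_log_div_add_of_eq (congrArg p (Function.update_eq_self j θ₀)) hpos.ne'
    hp₂ (hG 0) hG'
  rw [Function.update_eq_self] at h
  exact (hq₂.congr_of_eventuallyEq hq₁Near.symm).unique h

end RelEntropyIntegrand

theorem fisher_metric_group_tsallis_general
    {X : Type*} [MeasurableSpace X] (μ : Measure X) {m : ℕ}
    (q : ℝ) (hq : q ≠ 1) (G : ℝ → ℝ)
    (hG : ∀ t, G t = (Real.exp ((1 - q) * t) - 1) / (1 - q))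
    (p : (Fin m → ℝ) → X → ℝ)
    -- `p` is a parametrized family of probability densities
    (hppos : ∀ θ : Fin m → ℝ, ∀ᵐ x ∂μ, 0 < p θ x)
    (θ₀ : Fin m → ℝ) (j k : Fin m)
    -- for μ-a.e. x, the map θ ↦ p θ x has first partial derivatives `p₁ i θ x` ...
    (p₁ : Fin m → (Fin m → ℝ) → X → ℝ)
    (hp₁ : ∀ᵐ x ∂μ, ∀ (i : Fin m) (θ : Fin m → ℝ),
      HasDerivAt (fun s => p (Function.update θ i s) x) (p₁ i θ x) (θ i))
    -- ... and the mixed second partial derivative `∂_j ∂_k p = p₂` at θ₀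
    (p₂ : X → ℝ)
    (hp₂ : ∀ᵐ x ∂μ, HasDerivAt (fun s => p₁ k (Function.update θ₀ j s) x) (p₂ x) (θ₀ j))
    -- `A θ = D_G(p θ ‖ p θ₀)`, and `dA = ∂_k A` along the j-line through θ₀
    (dA : (Fin m → ℝ) → ℝ)
    -- differentiation under the integral sign is valid to first order ...
    (q₁ : ℝ → X → ℝ)
    (hq₁ : ∀ᵐ x ∂μ, ∀ s : ℝ, HasDerivAt
      (fun t => p (Function.update (Function.update θ₀ j s) k t) x *
        G (Real.log (p (Function.update (Function.update θ₀ j s) k t) x / p θ₀ x)))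
      (q₁ s x) (Function.update θ₀ j s k))
    (hDUI₁ : ∀ s : ℝ, dA (Function.update θ₀ j s) = ∫ x, q₁ s x ∂μ)
    -- ... and to second order at θ₀
    (q₂ : X → ℝ)
    (hq₂ : ∀ᵐ x ∂μ, HasDerivAt (fun s => q₁ s x) (q₂ x) (θ₀ j))
    (hDUI₂ : HasDerivAt (fun s => ∫ x, q₁ s x ∂μ) (∫ x, q₂ x ∂μ) (θ₀ j))
    -- the integrals of the derivatives of `p` vanish at θ₀
    (hvan₂ : ∫ x, p₂ x ∂μ = 0)
    -- (integrability of the pieces)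
    (hint₂ : Integrable p₂ μ)
    (hfish : Integrable
      (fun x => p θ₀ x * ((p₁ j θ₀ x / p θ₀ x) * (p₁ k θ₀ x / p θ₀ x))) μ) :
    deriv G 0 = 1 ∧ deriv (deriv G) 0 = 1 - q ∧
    HasDerivAt (fun s => dA (Function.update θ₀ j s))
      ((2 - q) *
        ∫ x, p θ₀ x * ((p₁ j θ₀ x / p θ₀ x) * (p₁ k θ₀ x / p θ₀ x)) ∂μ)
      (θ₀ j) := by
  obtain rfl : G = tsallisGroupExp q := funext hG
  have hG₁ := hasDerivAt_tsallisGroupExp hq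
  have hG₂ := hasDerivAt_exp_const_mul_zero (1 - q)
  refine ⟨by simpa using (hG₁ 0).deriv, by simpa [deriv_tsallisGroupExp hq] using hG₂.deriv, ?_⟩
  have hq₂_eq : ∀ᵐ x ∂μ, q₂ x = p₂ x * (tsallisGroupExp q 0 + Real.exp ((1 - q) * 0)) +
      (Real.exp ((1 - q) * 0) + (1 - q)) *
        (p θ₀ x * ((p₁ j θ₀ x / p θ₀ x) * (p₁ k θ₀ x / p θ₀ x))) := by
    filter_upwards [hp₁, hp₂, hppos θ₀, hq₁, hq₂] with x hp₁x hp₂x hposx hq₁x hq₂x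
    exact relEntropyIntegrand_second_partial_eq (p := fun θ => p θ x) (k := k) hG₁ hG₂ hp₁x hposx hp₂x hq₁x hq₂x
  have hq₂_int : ∫ x, q₂ x ∂μ =
      (2 - q) * ∫ x, p θ₀ x * ((p₁ j θ₀ x / p θ₀ x) * (p₁ k θ₀ x / p θ₀ x)) ∂μ := by
    rw [integral_congr_ae hq₂_eq, integral_add (hint₂.mul_const _) (hfish.const_mul _),
      integral_mul_const, integral_const_mul, hvan₂]
    simp only [tsallisGroupExp, mul_zero, Real.exp_zero, sub_self, zero_div, zero_mul, zero_add]
    ring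
  rw [hq₂_int] at hDUI₂
  exact hDUI₂.congr_of_eventuallyEq (Eventually.of_forall hDUI₁)

/-- (Fisher metric group, Tsallis class.) For the Tsallis group
exponential `G_T(t) = (exp((1-q)t) - 1)/(1-q)` with `q ≠ 1`, one has `G_T'(0) = 1`,
`G_T''(0) = 1 - q`, and the Hessian at `θ = θ₀` of
`A(θ) = ∫ p(θ)(x) · G_T(ln (p(θ)(x)/p(θ₀)(x))) dμ` equals `(2 - q) · g_{jk}(θ₀)`,
where `g_{jk}(θ₀)` is the standard Fisher information matrix.

Here `p₁ i θ x` is the `i`-th first partial derivative of `θ ↦ p θ x`, `p₂` is the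
mixed second partial `∂_j ∂_k p` at `θ₀`, `dA` is the partial derivative of `A` in
the `k`-th direction (along the `j`-line through `θ₀`), and the hypotheses
`hq₁, hDUI₁, hq₂, hDUI₂` express that differentiation under the integral sign is
valid up to second order at `θ₀`. -/
theorem fisher_metric_group_tsallis
    {X : Type*} [MeasurableSpace X] (μ : Measure X) {m : ℕ}
    (q : ℝ) (hq : q ≠ 1) (G : ℝ → ℝ)
    (hG : ∀ t, G t = (Real.exp ((1 - q) * t) - 1) / (1 - q))
    (p : (Fin m → ℝ) → X → ℝ)
    -- `p` is a parametrized family of probability densities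
    (hppos : ∀ θ : Fin m → ℝ, ∀ᵐ x ∂μ, 0 < p θ x)
    (hpone : ∀ θ : Fin m → ℝ, ∫ x, p θ x ∂μ = 1)
    (θ₀ : Fin m → ℝ) (j k : Fin m)
    -- for μ-a.e. x, the map θ ↦ p θ x has first partial derivatives `p₁ i θ x` ...
    (p₁ : Fin m → (Fin m → ℝ) → X → ℝ)
    (hp₁ : ∀ᵐ x ∂μ, ∀ (i : Fin m) (θ : Fin m → ℝ),
      HasDerivAt (fun s => p (Function.update θ i s) x) (p₁ i θ x) (θ i))
    -- ... and the mixed second partial derivative `∂_j ∂_k p = p₂` at θ₀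
    (p₂ : X → ℝ)
    (hp₂ : ∀ᵐ x ∂μ, HasDerivAt (fun s => p₁ k (Function.update θ₀ j s) x) (p₂ x) (θ₀ j))
    -- `A θ = D_G(p θ ‖ p θ₀)`, and `dA = ∂_k A` along the j-line through θ₀
    (A dA : (Fin m → ℝ) → ℝ)
    (hA : ∀ θ, A θ = ∫ x, p θ x * G (Real.log (p θ x / p θ₀ x)) ∂μ)
    (hdA : ∀ s : ℝ, HasDerivAt
      (fun t => A (Function.update (Function.update θ₀ j s) k t))
      (dA (Function.update θ₀ j s)) (Function.update θ₀ j s k))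
    -- differentiation under the integral sign is valid to first order ...
    (q₁ : ℝ → X → ℝ)
    (hq₁ : ∀ᵐ x ∂μ, ∀ s : ℝ, HasDerivAt
      (fun t => p (Function.update (Function.update θ₀ j s) k t) x *
        G (Real.log (p (Function.update (Function.update θ₀ j s) k t) x / p θ₀ x)))
      (q₁ s x) (Function.update θ₀ j s k))
    (hDUI₁ : ∀ s : ℝ, dA (Function.update θ₀ j s) = ∫ x, q₁ s x ∂μ)
    -- ... and to second order at θ₀
    (q₂ : X → ℝ)
    (hq₂ : ∀ᵐ x ∂μ, HasDerivAt (fun s => q₁ s x) (q₂ x) (θ₀ j))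
    (hDUI₂ : HasDerivAt (fun s => ∫ x, q₁ s x ∂μ) (∫ x, q₂ x ∂μ) (θ₀ j))
    -- the integrals of the derivatives of `p` vanish at θ₀
    (hvan₁ : ∫ x, p₁ j θ₀ x ∂μ = 0)
    (hvan₂ : ∫ x, p₂ x ∂μ = 0)
    -- (integrability of the pieces)
    (hint₂ : Integrable p₂ μ)
    (hfish : Integrable
      (fun x => p θ₀ x * ((p₁ j θ₀ x / p θ₀ x) * (p₁ k θ₀ x / p θ₀ x))) μ) :
    deriv G 0 = 1 ∧ deriv (deriv G) 0 = 1 - q ∧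
    HasDerivAt (fun s => dA (Function.update θ₀ j s))
      ((2 - q) *
        ∫ x, p θ₀ x * ((p₁ j θ₀ x / p θ₀ x) * (p₁ k θ₀ x / p θ₀ x)) ∂μ)
      (θ₀ j) :=
  fisher_metric_group_tsallis_general μ q hq G hG p hppos θ₀ j k p₁ hp₁ p₂ hp₂ dA q₁ hq₁ hDUI₁ q₂
    hq₂ hDUI₂ hvan₂ hint₂ hfish

end
end

section
/- Let a ≠ b be real numbers and let G_{ABR}(t) = (e^{at} − e^{bt})/(a − b) be the Abe–Borges–Roditi group exponential. Under the same hypotheses as in the Fisher metric group theorem (p : ℝ^m → X → ℝ a positive parametrized family of probability densities, differentiation under the integral sign valid up to second order at θ₀ for A(θ) = ∫_X p(θ)(x) G_{ABR}(ln(p(θ)(x)/p(θ₀)(x))) dμ, and ∫_X ∂_j p(θ₀) dμ = 0 = ∫_X ∂_j ∂_k p(θ₀) dμ), the Hessian entry ∂_j ∂_k A(θ₀) equals (1 + a + b) · g_{jk}(θ₀), where g_{jk}(θ₀) is the standard Fisher information matrix; in particular G_{ABR}'(0) = 1 and G_{ABR}''(0) = a + b. -/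
/-!
Write `θ(s)` for `θ₀` with its `j`-th coordinate set to `s`. Where `p(θ(s)) > 0`, the chain
rule gives `∂_k [p G(log (p / p(θ₀)))] = ∂_k p · H(log (p(θ(s)) / p(θ₀)))` with `H = G + G'`.
Differentiating once more in `s` at `θ₀`, where the logarithm vanishes, gives
`∂_j ∂_k p · H(0) + ∂_k p · H'(0) · ∂_j p / p = ∂_j ∂_k p + (1 + G''(0)) ∂_j p ∂_k p / p`,
using `G(0) = 0` and `G'(0) = 1`. Integrating, the first term drops out and the second is
`(1 + G''(0)) g_{jk}`. For `G_{ABR}` one computes `G'(0) = 1` and `G''(0) = a + b`.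
-/

open MeasureTheory Function Real

theorem HasDerivAt.unique_of_eqOn_dense {𝕜 F : Type*} [NontriviallyNormedField 𝕜]
    [NormedAddCommGroup F] [NormedSpace 𝕜 F] {f g : 𝕜 → F} {f' g' : F} {x : 𝕜} {S : Set 𝕜}
    (hS : Dense S) (hf : HasDerivAt f f' x) (hg : HasDerivAt g g' x) (hfg : Set.EqOn f g S)
    (hx : f x = g x) : f' = g' :=
  (uniqueDiffWithinAt_univ.mono_closure (by simp [hS.closure_eq])).eq_deriv S
    hf.hasDerivWithinAt (hg.hasDerivWithinAt.congr hfg hx)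

theorem hasDerivAt_mul_comp_log_div {u G : ℝ → ℝ} {u' c t : ℝ} (hu : HasDerivAt u u' t)
    (hut : 0 < u t) (hc : 0 < c) (hG : DifferentiableAt ℝ G (log (u t / c))) :
    HasDerivAt (fun t => u t * G (log (u t / c)))
      (u' * (G (log (u t / c)) + deriv G (log (u t / c)))) t := by
  have hlog := (hu.div_const c).log (div_pos hut hc).ne'
  refine (hu.fun_mul (hG.hasDerivAt.comp t hlog)).congr_deriv ?_
  simp only [comp_apply]
  field_simp

theorem hasDerivAt_mul_comp_log_div_of_eq {u v H : ℝ → ℝ} {u' v' H' c s : ℝ}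
    (hu : HasDerivAt u u' s) (hv : HasDerivAt v v' s) (hus : u s = c) (hc : 0 < c)
    (hH : HasDerivAt H H' 0) :
    HasDerivAt (fun s => v s * H (log (u s / c))) (v' * H 0 + v s * (H' * (u' / c))) s := by
  have hlog := (hu.div_const c).log (by rw [hus, div_self hc.ne']; exact one_ne_zero)
  have hlog0 : log (u s / c) = 0 := by rw [hus, div_self hc.ne', log_one]
  rw [← hlog0] at hH
  refine (hv.fun_mul (hH.comp s hlog)).congr_deriv ?_
  simp only [comp_apply, hus, div_self hc.ne', div_one, log_one]

section Pointwise

variable {ι : Type*} [DecidableEq ι] {G : ℝ → ℝ} {G₂ : ℝ} {f : (ι → ℝ) → ℝ}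
  {f₁ : ι → (ι → ℝ) → ℝ} {g₁ : ℝ → ℝ} {f₂ g₂ : ℝ} {θ₀ : ι → ℝ} {j k : ι}

theorem eq_partial_mul_log_div_add_deriv
    (hG : Differentiable ℝ G)
    (hf₁ : ∀ i θ, HasDerivAt (fun s => f (update θ i s)) (f₁ i θ) (θ i))
    (hg₁ : ∀ s, HasDerivAt (fun t => f (update (update θ₀ j s) k t) *
      G (log (f (update (update θ₀ j s) k t) / f θ₀))) (g₁ s) (update θ₀ j s k))
    {s : ℝ} (hs : 0 < f (update θ₀ j s)) (h₀ : 0 < f θ₀) :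
    g₁ s = f₁ k (update θ₀ j s) *
      (G (log (f (update θ₀ j s) / f θ₀)) + deriv G (log (f (update θ₀ j s) / f θ₀))) := by
  rw [← update_eq_self k (update θ₀ j s)] at hs
  have hchain := hasDerivAt_mul_comp_log_div (hf₁ k (update θ₀ j s)) hs h₀ (hG _)
  rw [update_eq_self] at hchain
  exact (hg₁ s).unique hchain

theorem eq_second_partial_add_mul_fisher
    (hG : Differentiable ℝ G) (hG₀ : G 0 = 0) (hG₁ : deriv G 0 = 1)
    (hG₂ : HasDerivAt (deriv G) G₂ 0)
    (hf₁ : ∀ i θ, HasDerivAt (fun s => f (update θ i s)) (f₁ i θ) (θ i))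
    (hf₂ : HasDerivAt (fun s => f₁ k (update θ₀ j s)) f₂ (θ₀ j))
    (hg₁ : ∀ s, HasDerivAt (fun t => f (update (update θ₀ j s) k t) *
      G (log (f (update (update θ₀ j s) k t) / f θ₀))) (g₁ s) (update θ₀ j s k))
    (hg₂ : HasDerivAt g₁ g₂ (θ₀ j))
    {S : Set ℝ} (hS : Dense S) (hpos : ∀ s ∈ S, 0 < f (update θ₀ j s)) (h₀ : 0 < f θ₀) :
    g₂ = f₂ + (1 + G₂) * (f θ₀ * ((f₁ j θ₀ / f θ₀) * (f₁ k θ₀ / f θ₀))) := by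
  have hH : HasDerivAt (fun t => G t + deriv G t) (1 + G₂) 0 := by
    rw [← hG₁]
    exact (hG 0).hasDerivAt.fun_add hG₂
  have hΦ := hasDerivAt_mul_comp_log_div_of_eq (hf₁ j θ₀) hf₂ (by rw [update_eq_self]) h₀ hH
  have hθ₀ : 0 < f (update θ₀ j (θ₀ j)) := by rwa [update_eq_self]
  rw [hg₂.unique_of_eqOn_dense hS hΦ
    (fun s hs => eq_partial_mul_log_div_add_deriv hG hf₁ hg₁ (hpos s hs) h₀)
    (eq_partial_mul_log_div_add_deriv hG hf₁ hg₁ hθ₀ h₀)]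
  simp only [update_eq_self, hG₀, hG₁, zero_add, mul_one]
  field_simp

end Pointwise

noncomputable def fisherInfo {X ι : Type*} [MeasurableSpace X] (μ : Measure X)
    (p : (ι → ℝ) → X → ℝ) (p₁ : ι → (ι → ℝ) → X → ℝ) (θ : ι → ℝ) (j k : ι) : ℝ :=
  ∫ x, p θ x * ((p₁ j θ x / p θ x) * (p₁ k θ x / p θ x)) ∂μ

theorem integral_eq_one_add_mul_fisherInfo {X ι : Type*} [MeasurableSpace X] [DecidableEq ι]
    {μ : Measure X} {G : ℝ → ℝ} {G₂ : ℝ} (hG : Differentiable ℝ G) (hG₀ : G 0 = 0)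
    (hG₁ : deriv G 0 = 1) (hG₂ : HasDerivAt (deriv G) G₂ 0)
    {p : (ι → ℝ) → X → ℝ} (hppos : ∀ θ, ∀ᵐ x ∂μ, 0 < p θ x) {θ₀ : ι → ℝ} {j k : ι}
    {p₁ : ι → (ι → ℝ) → X → ℝ}
    (hp₁ : ∀ᵐ x ∂μ, ∀ i θ, HasDerivAt (fun s => p (update θ i s) x) (p₁ i θ x) (θ i))
    {p₂ : X → ℝ}
    (hp₂ : ∀ᵐ x ∂μ, HasDerivAt (fun s => p₁ k (update θ₀ j s) x) (p₂ x) (θ₀ j))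
    {q₁ : ℝ → X → ℝ}
    (hq₁ : ∀ᵐ x ∂μ, ∀ s, HasDerivAt (fun t => p (update (update θ₀ j s) k t) x *
      G (log (p (update (update θ₀ j s) k t) x / p θ₀ x))) (q₁ s x) (update θ₀ j s k))
    {q₂ : X → ℝ} (hq₂ : ∀ᵐ x ∂μ, HasDerivAt (fun s => q₁ s x) (q₂ x) (θ₀ j))
    (hvan₂ : ∫ x, p₂ x ∂μ = 0) (hint₂ : Integrable p₂ μ)
    (hfish : Integrable (fun x => p θ₀ x * ((p₁ j θ₀ x / p θ₀ x) * (p₁ k θ₀ x / p θ₀ x))) μ) :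
    ∫ x, q₂ x ∂μ = (1 + G₂) * fisherInfo μ p p₁ θ₀ j k := by
  -- positivity is only known a.e. for each parameter, so it is imposed on the countable dense
  -- set of rational values of the `j`-th coordinate
  have hrat : ∀ᵐ x ∂μ, ∀ q : ℚ, 0 < p (update θ₀ j q) x := ae_all_iff.mpr fun q => hppos _
  have hae : ∀ᵐ x ∂μ,
      q₂ x = p₂ x + (1 + G₂) * (p θ₀ x * ((p₁ j θ₀ x / p θ₀ x) * (p₁ k θ₀ x / p θ₀ x))) := by
    filter_upwards [hp₁, hp₂, hq₁, hq₂, hppos θ₀, hrat] with x hp₁x hp₂x hq₁x hq₂x h₀ hratx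
    exact eq_second_partial_add_mul_fisher (f := fun θ => p θ x) hG hG₀ hG₁ hG₂ hp₁x hp₂x hq₁x
      hq₂x Rat.denseRange_cast (by rintro _ ⟨q, rfl⟩; exact hratx q) h₀
  rw [integral_congr_ae hae, integral_add hint₂ (hfish.const_mul _), integral_const_mul, hvan₂,
    zero_add, fisherInfo]

noncomputable def abrExp (a b t : ℝ) : ℝ := (exp (a * t) - exp (b * t)) / (a - b)

theorem hasDerivAt_exp_mul (c t : ℝ) : HasDerivAt (fun t => exp (c * t)) (c * exp (c * t)) t := by
  simpa [mul_comm] using ((hasDerivAt_id t).const_mul c).exp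

theorem hasDerivAt_abrExp (a b t : ℝ) :
    HasDerivAt (abrExp a b) ((a * exp (a * t) - b * exp (b * t)) / (a - b)) t :=
  ((hasDerivAt_exp_mul a t).sub (hasDerivAt_exp_mul b t)).div_const _

theorem differentiable_abrExp (a b : ℝ) : Differentiable ℝ (abrExp a b) :=
  fun t => (hasDerivAt_abrExp a b t).differentiableAt

theorem abrExp_zero (a b : ℝ) : abrExp a b 0 = 0 := by simp [abrExp]

theorem deriv_abrExp_zero {a b : ℝ} (hab : a ≠ b) : deriv (abrExp a b) 0 = 1 := by
  simp [(hasDerivAt_abrExp a b 0).deriv, div_self (sub_ne_zero.mpr hab)]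

theorem hasDerivAt_deriv_abrExp_zero {a b : ℝ} (hab : a ≠ b) :
    HasDerivAt (deriv (abrExp a b)) (a + b) 0 := by
  have hderiv : deriv (abrExp a b) = fun t => (a * exp (a * t) - b * exp (b * t)) / (a - b) :=
    funext fun t => (hasDerivAt_abrExp a b t).deriv
  rw [hderiv]
  refine ((((hasDerivAt_exp_mul a 0).const_mul a).sub
    ((hasDerivAt_exp_mul b 0).const_mul b)).div_const _).congr_deriv ?_
  simp only [mul_zero, exp_zero, mul_one]
  field_simp [sub_ne_zero.mpr hab]
  ring

theorem fisher_metric_group_abe_borges_roditi_general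
    {X : Type*} [MeasurableSpace X] (μ : Measure X) {m : ℕ}
    (a b : ℝ) (hab : a ≠ b) (G : ℝ → ℝ)
    (hG : ∀ t, G t = (Real.exp (a * t) - Real.exp (b * t)) / (a - b))
    (p : (Fin m → ℝ) → X → ℝ)
    -- `p` is a parametrized family of probability densities
    (hppos : ∀ θ : Fin m → ℝ, ∀ᵐ x ∂μ, 0 < p θ x)
    (θ₀ : Fin m → ℝ) (j k : Fin m)
    -- for μ-a.e. x, the map θ ↦ p θ x has first partial derivatives `p₁ i θ x` ...
    (p₁ : Fin m → (Fin m → ℝ) → X → ℝ)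
    (hp₁ : ∀ᵐ x ∂μ, ∀ (i : Fin m) (θ : Fin m → ℝ),
      HasDerivAt (fun s => p (Function.update θ i s) x) (p₁ i θ x) (θ i))
    -- ... and the mixed second partial derivative `∂_j ∂_k p = p₂` at θ₀
    (p₂ : X → ℝ)
    (hp₂ : ∀ᵐ x ∂μ, HasDerivAt (fun s => p₁ k (Function.update θ₀ j s) x) (p₂ x) (θ₀ j))
    -- `A θ = D_G(p θ ‖ p θ₀)`, and `dA = ∂_k A` along the j-line through θ₀
    (dA : (Fin m → ℝ) → ℝ)
    -- differentiation under the integral sign is valid to first order ...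
    (q₁ : ℝ → X → ℝ)
    (hq₁ : ∀ᵐ x ∂μ, ∀ s : ℝ, HasDerivAt
      (fun t => p (Function.update (Function.update θ₀ j s) k t) x *
        G (Real.log (p (Function.update (Function.update θ₀ j s) k t) x / p θ₀ x)))
      (q₁ s x) (Function.update θ₀ j s k))
    (hDUI₁ : ∀ s : ℝ, dA (Function.update θ₀ j s) = ∫ x, q₁ s x ∂μ)
    -- ... and to second order at θ₀
    (q₂ : X → ℝ)
    (hq₂ : ∀ᵐ x ∂μ, HasDerivAt (fun s => q₁ s x) (q₂ x) (θ₀ j))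
    (hDUI₂ : HasDerivAt (fun s => ∫ x, q₁ s x ∂μ) (∫ x, q₂ x ∂μ) (θ₀ j))
    -- the integrals of the derivatives of `p` vanish at θ₀
    (hvan₂ : ∫ x, p₂ x ∂μ = 0)
    -- (integrability of the pieces)
    (hint₂ : Integrable p₂ μ)
    (hfish : Integrable
      (fun x => p θ₀ x * ((p₁ j θ₀ x / p θ₀ x) * (p₁ k θ₀ x / p θ₀ x))) μ) :
    deriv G 0 = 1 ∧ deriv (deriv G) 0 = a + b ∧
    HasDerivAt (fun s => dA (Function.update θ₀ j s))
      ((1 + a + b) *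
        ∫ x, p θ₀ x * ((p₁ j θ₀ x / p θ₀ x) * (p₁ k θ₀ x / p θ₀ x)) ∂μ)
      (θ₀ j) := by
  obtain rfl : G = abrExp a b := funext hG
  refine ⟨deriv_abrExp_zero hab, (hasDerivAt_deriv_abrExp_zero hab).deriv, ?_⟩
  have hfisher : ∫ x, q₂ x ∂μ = (1 + a + b) * fisherInfo μ p p₁ θ₀ j k := by
    rw [add_assoc]
    exact integral_eq_one_add_mul_fisherInfo (differentiable_abrExp a b) (abrExp_zero a b)
      (deriv_abrExp_zero hab) (hasDerivAt_deriv_abrExp_zero hab) hppos hp₁ hp₂ hq₁ hq₂ hvan₂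
      hint₂ hfish
  rw [funext hDUI₁]
  exact hfisher ▸ hDUI₂

/-- (Fisher metric group, Abe–Borges–Roditi class.) For the
Abe–Borges–Roditi group exponential `G_ABR(t) = (exp(at) - exp(bt))/(a-b)` with
`a ≠ b`, one has `G_ABR'(0) = 1`, `G_ABR''(0) = a + b`, and the Hessian at `θ = θ₀`
of `A(θ) = ∫ p(θ)(x) · G_ABR(ln (p(θ)(x)/p(θ₀)(x))) dμ` equals
`(1 + a + b) · g_{jk}(θ₀)`, where `g_{jk}(θ₀)` is the standard Fisher information
matrix.

Here `p₁ i θ x` is the `i`-th first partial derivative of `θ ↦ p θ x`, `p₂` is the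
mixed second partial `∂_j ∂_k p` at `θ₀`, `dA` is the partial derivative of `A` in
the `k`-th direction (along the `j`-line through `θ₀`), and the hypotheses
`hq₁, hDUI₁, hq₂, hDUI₂` express that differentiation under the integral sign is
valid up to second order at `θ₀`. -/
theorem fisher_metric_group_abe_borges_roditi
    {X : Type*} [MeasurableSpace X] (μ : Measure X) {m : ℕ}
    (a b : ℝ) (hab : a ≠ b) (G : ℝ → ℝ)
    (hG : ∀ t, G t = (Real.exp (a * t) - Real.exp (b * t)) / (a - b))
    (p : (Fin m → ℝ) → X → ℝ)
    -- `p` is a parametrized family of probability densities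
    (hppos : ∀ θ : Fin m → ℝ, ∀ᵐ x ∂μ, 0 < p θ x)
    (hpone : ∀ θ : Fin m → ℝ, ∫ x, p θ x ∂μ = 1)
    (θ₀ : Fin m → ℝ) (j k : Fin m)
    -- for μ-a.e. x, the map θ ↦ p θ x has first partial derivatives `p₁ i θ x` ...
    (p₁ : Fin m → (Fin m → ℝ) → X → ℝ)
    (hp₁ : ∀ᵐ x ∂μ, ∀ (i : Fin m) (θ : Fin m → ℝ),
      HasDerivAt (fun s => p (Function.update θ i s) x) (p₁ i θ x) (θ i))
    -- ... and the mixed second partial derivative `∂_j ∂_k p = p₂` at θ₀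
    (p₂ : X → ℝ)
    (hp₂ : ∀ᵐ x ∂μ, HasDerivAt (fun s => p₁ k (Function.update θ₀ j s) x) (p₂ x) (θ₀ j))
    -- `A θ = D_G(p θ ‖ p θ₀)`, and `dA = ∂_k A` along the j-line through θ₀
    (A dA : (Fin m → ℝ) → ℝ)
    (hA : ∀ θ, A θ = ∫ x, p θ x * G (Real.log (p θ x / p θ₀ x)) ∂μ)
    (hdA : ∀ s : ℝ, HasDerivAt
      (fun t => A (Function.update (Function.update θ₀ j s) k t))
      (dA (Function.update θ₀ j s)) (Function.update θ₀ j s k))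
    -- differentiation under the integral sign is valid to first order ...
    (q₁ : ℝ → X → ℝ)
    (hq₁ : ∀ᵐ x ∂μ, ∀ s : ℝ, HasDerivAt
      (fun t => p (Function.update (Function.update θ₀ j s) k t) x *
        G (Real.log (p (Function.update (Function.update θ₀ j s) k t) x / p θ₀ x)))
      (q₁ s x) (Function.update θ₀ j s k))
    (hDUI₁ : ∀ s : ℝ, dA (Function.update θ₀ j s) = ∫ x, q₁ s x ∂μ)
    -- ... and to second order at θ₀
    (q₂ : X → ℝ)
    (hq₂ : ∀ᵐ x ∂μ, HasDerivAt (fun s => q₁ s x) (q₂ x) (θ₀ j))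
    (hDUI₂ : HasDerivAt (fun s => ∫ x, q₁ s x ∂μ) (∫ x, q₂ x ∂μ) (θ₀ j))
    -- the integrals of the derivatives of `p` vanish at θ₀
    (hvan₁ : ∫ x, p₁ j θ₀ x ∂μ = 0)
    (hvan₂ : ∫ x, p₂ x ∂μ = 0)
    -- (integrability of the pieces)
    (hint₂ : Integrable p₂ μ)
    (hfish : Integrable
      (fun x => p θ₀ x * ((p₁ j θ₀ x / p θ₀ x) * (p₁ k θ₀ x / p θ₀ x))) μ) :
    deriv G 0 = 1 ∧ deriv (deriv G) 0 = a + b ∧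
    HasDerivAt (fun s => dA (Function.update θ₀ j s))
      ((1 + a + b) *
        ∫ x, p θ₀ x * ((p₁ j θ₀ x / p θ₀ x) * (p₁ k θ₀ x / p θ₀ x)) ∂μ)
      (θ₀ j) :=
  fisher_metric_group_abe_borges_roditi_general μ a b hab G hG p hppos θ₀ j k p₁ hp₁ p₂ hp₂ dA q₁
    hq₁ hDUI₁ q₂ hq₂ hDUI₂ hvan₂ hint₂ hfish
end

section
/- Let G : ℝ → ℝ satisfy G(0) = 0 and suppose the function f(x) = x · G(ln x) is convex on (0, ∞) (extended by f(0) = 0). Let p and q be probability densities on a measure space (X, μ) (p, q ≥ 0 μ-a.e., ∫_X p dμ = ∫_X q dμ = 1), with q > 0 μ-a.e., and assume the function x ↦ p(x) G(ln(p(x)/q(x))) is μ-integrable. Then the relative entropy group is nonnegative: D_G(p‖q) = ∫_X p(x) G(ln(p(x)/q(x))) dμ ≥ 0. -/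
open MeasureTheory

/-- Supporting line at `1` for a convex function on `[0, ∞)` with `f 1 = 0`. -/
lemma exists_support_line {f : ℝ → ℝ} (hconv : ConvexOn ℝ (Set.Ici (0 : ℝ)) f)
    (hf1 : f 1 = 0) :
    ∃ c : ℝ, ∀ t ∈ Set.Ici (0 : ℝ), c * (t - 1) ≤ f t := by
  have h1 : (1 : ℝ) ∈ Set.Ici (0 : ℝ) := by norm_num
  have hmono := hconv.slope_mono h1
  have hslope : ∀ t : ℝ, slope f 1 t = f t / (t - 1) := by
    intro t; rw [slope_def_field, hf1, sub_zero]
  set S := slope f 1 '' Set.Ioi 1 with hS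
  have hne : S.Nonempty := ⟨slope f 1 2, ⟨2, by norm_num, rfl⟩⟩
  have hmem : ∀ t : ℝ, 1 < t → t ∈ Set.Ici (0 : ℝ) \ {1} := by
    intro t ht; exact ⟨le_of_lt (lt_trans one_pos ht), by simp [ne_of_gt ht]⟩
  have hmem' : ∀ t : ℝ, 0 ≤ t → t < 1 → t ∈ Set.Ici (0 : ℝ) \ {1} := by
    intro t ht ht'; exact ⟨ht, by simp [ne_of_lt ht']⟩
  have hbdd : BddBelow S := by
    refine ⟨slope f 1 0, ?_⟩
    rintro s ⟨t, ht, rfl⟩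
    exact hmono (hmem' 0 le_rfl one_pos) (hmem t ht) (le_of_lt (lt_trans one_pos ht))
  refine ⟨sInf S, fun t ht => ?_⟩
  rcases lt_trichotomy t 1 with h | h | h
  · have hle : slope f 1 t ≤ sInf S := by
      refine le_csInf hne ?_
      rintro s ⟨u, hu, rfl⟩
      exact hmono (hmem' t ht h) (hmem u hu) (le_of_lt (lt_trans h hu))
    rw [hslope] at hle
    have htn : t - 1 < 0 := by linarith
    calc sInf S * (t - 1) ≤ f t / (t - 1) * (t - 1) := by
          apply mul_le_mul_of_nonpos_right hle (le_of_lt htn)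
      _ = f t := div_mul_cancel₀ _ (ne_of_lt htn)
  · subst h; simp [hf1]
  · have hle : sInf S ≤ slope f 1 t := csInf_le hbdd ⟨t, h, rfl⟩
    rw [hslope] at hle
    have htp : 0 < t - 1 := by linarith
    calc sInf S * (t - 1) ≤ f t / (t - 1) * (t - 1) :=
          mul_le_mul_of_nonneg_right hle (le_of_lt htp)
      _ = f t := div_mul_cancel₀ _ (ne_of_gt htp)

/-- Nonnegativity of the relative entropy group.  If `G(0) = 0` and
`f(x) = x · G(ln x)` (extended by `f(0) = 0`) is convex on `[0, ∞)`, then for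
probability densities `p, q` on `(X, μ)` with `q > 0` μ-a.e.,
`D_G(p ‖ q) = ∫ p(x) · G(ln (p(x)/q(x))) dμ ≥ 0`. -/
theorem relative_entropy_group_nonneg
    {X : Type*} [MeasurableSpace X] (μ : Measure X)
    (G : ℝ → ℝ) (hG0 : G 0 = 0)
    (hconv : ConvexOn ℝ (Set.Ici (0 : ℝ))
      (fun t => if t = 0 then 0 else t * G (Real.log t)))
    (p q : X → ℝ) (hpm : Measurable p) (hqm : Measurable q)
    (hp0 : ∀ᵐ x ∂μ, 0 ≤ p x) (hq0 : ∀ᵐ x ∂μ, 0 < q x)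
    (hp1 : ∫ x, p x ∂μ = 1) (hq1 : ∫ x, q x ∂μ = 1)
    (hint : Integrable (fun x => p x * G (Real.log (p x / q x))) μ) :
    0 ≤ ∫ x, p x * G (Real.log (p x / q x)) ∂μ := by
  set f : ℝ → ℝ := fun t => if t = 0 then 0 else t * G (Real.log t) with hf
  have hf1 : f 1 = 0 := by simp [hf, Real.log_one, hG0]
  obtain ⟨c, hc⟩ := exists_support_line hconv hf1
  have hpint : Integrable p μ := integrable_of_integral_eq_one hp1
  have hqint : Integrable q μ := integrable_of_integral_eq_one hq1
  -- a.e. pointwise bound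
  have hae : ∀ᵐ x ∂μ, c * (p x - q x) ≤ p x * G (Real.log (p x / q x)) := by
    filter_upwards [hp0, hq0] with x hp hq
    have hqne : q x ≠ 0 := ne_of_gt hq
    have hratio : 0 ≤ p x / q x := div_nonneg hp (le_of_lt hq)
    have hkey := hc (p x / q x) hratio
    rcases eq_or_lt_of_le hp with h0 | h0
    · -- p x = 0
      have hpx : p x = 0 := h0.symm
      have : f (p x / q x) = 0 := by simp [hf, hpx]
      rw [this] at hkey
      have : c * (p x / q x - 1) = c * (p x - q x) / q x := by
        field_simp
      rw [this] at hkey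
      have := (div_nonpos_iff.mp (le_of_le_of_eq hkey rfl))
      -- simpler: multiply hkey by q x > 0
      have h2 : c * (p x - q x) / q x * q x ≤ 0 * q x := by
        exact mul_le_mul_of_nonneg_right hkey (le_of_lt hq)
      rw [div_mul_cancel₀ _ hqne, zero_mul] at h2
      calc c * (p x - q x) ≤ 0 := h2
        _ = p x * G (Real.log (p x / q x)) := by rw [hpx, zero_mul]
    · -- p x > 0
      have hratio' : p x / q x ≠ 0 := ne_of_gt (div_pos h0 hq)
      have hfval : f (p x / q x) = p x / q x * G (Real.log (p x / q x)) := by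
        simp [hf, hratio']
      rw [hfval] at hkey
      have h2 := mul_le_mul_of_nonneg_right hkey (le_of_lt hq)
      have e1 : c * (p x / q x - 1) * q x = c * (p x - q x) := by field_simp
      have e2 : p x / q x * G (Real.log (p x / q x)) * q x
          = p x * G (Real.log (p x / q x)) := by field_simp
      rw [e1, e2] at h2
      exact h2
  have hlin : Integrable (fun x => c * (p x - q x)) μ :=
    ((hpint.sub hqint).const_mul c)
  have hmono := integral_mono_ae hlin hint hae
  have hcalc : ∫ x, c * (p x - q x) ∂μ = 0 := by
    rw [integral_const_mul, integral_sub hpint hqint, hp1, hq1, sub_self, mul_zero]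
  linarith [hmono, hcalc.symm ▸ hmono]
end

section
/- Fix real constants Σ > 0 and r with −1 < r < 1, and for parameters θ = (μ_x, σ) with σ > 0 consider the 2D correlated Gaussian model p(x, y; μ_x, σ) = (1/(2πΣ²√(1−r²))) · exp( −(1/(2(1−r²))) [ (x−μ_x)²/σ² + y²σ²/Σ⁴ + 2r(x−μ_x)y/Σ² ] ) on ℝ². Then p(·,·;μ_x,σ) is a probability density on ℝ² and its Fisher information matrix with respect to (μ_x, σ) is diagonal with entries g_{μμ} = 1/((1−r²)σ²), g_{σσ} = 4/((1−r²)σ²), and g_{μσ} = g_{σμ} = 0; that is, g_{jk} = (1/(1−r²)) diag(1/σ², 4/σ²). -/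
/-!
In the coordinates `s = (x - μx) / σ + y σ / S²`, `d = (x - μx) / σ - y σ / S²` the quadratic
form in the exponent becomes `s² / (4 (1 - r)) + d² / (4 (1 + r))`, so the model is a product of
two independent centred Gaussians in `(s, d)`, the change of variables having Jacobian `S² / 2`.
The score in `μx` is linear in `(s, d)` and the score in `σ` is `s d / ((1 - r²) σ)`, so the Fisher
information needs only the second moments of the two Gaussians, and the off-diagonal entry
vanishes because its integrand is odd.
-/

open MeasureTheory Real

theorem integral_eq_zero_of_odd {G E : Type*} [NormedAddCommGroup E] [NormedSpace ℝ E]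
    [AddGroup G] [MeasurableSpace G] [MeasurableNeg G] (μ : Measure G) [μ.IsNegInvariant]
    {f : G → E} (hf : f.Odd) : ∫ x, f x ∂μ = 0 := by
  have h := integral_neg_eq_self f μ
  simp only [hf _, integral_neg] at h
  linear_combination (norm := module) (-(1 / 2 : ℝ)) • h

theorem integral_comp_linear_prod {E : Type*} [NormedAddCommGroup E] [NormedSpace ℝ E]
    (f : ℝ × ℝ → E) {a b c d : ℝ} (h : a * d - b * c ≠ 0) :
    ∫ z : ℝ × ℝ, f (a * z.1 + b * z.2, c * z.1 + d * z.2) = |a * d - b * c|⁻¹ • ∫ z, f z := by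
  set L := Matrix.toLin (Module.Basis.finTwoProd ℝ) (Module.Basis.finTwoProd ℝ) !![a, b; c, d]
  have hdet : LinearMap.det L = a * d - b * c := by
    simp [L, LinearMap.det_toLin, Matrix.det_fin_two_of]
  have hL : MeasurableEmbedding L :=
    (L.equivOfDetNeZero (hdet ▸ h)).toContinuousLinearEquiv.toHomeomorph.measurableEmbedding
  simp_rw [← Matrix.toLin_finTwoProd_apply]
  rw [← hL.integral_map, Measure.map_linearMap_addHaar_eq_smul_addHaar _ (hdet ▸ h),
    integral_smul_measure, hdet, ENNReal.toReal_ofReal (abs_nonneg _), abs_inv]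

theorem integral_mul_exp_neg_mul_sq_eq_zero (b : ℝ) : ∫ x : ℝ, x * exp (-b * x ^ 2) = 0 :=
  integral_eq_zero_of_odd volume fun x => by ring_nf

theorem integrable_sq_mul_exp_neg_mul_sq {b : ℝ} (hb : 0 < b) :
    Integrable fun x : ℝ => x ^ 2 * exp (-b * x ^ 2) := by
  simpa using integrable_rpow_mul_exp_neg_mul_sq hb (s := 2) (by norm_num)

theorem integral_sq_mul_exp_neg_mul_sq {b : ℝ} (hb : 0 < b) :
    ∫ x : ℝ, x ^ 2 * exp (-b * x ^ 2) = √(π / b) / (2 * b) := by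
  have hderiv (x : ℝ) : HasDerivAt (fun x => x * exp (-b * x ^ 2))
      (exp (-b * x ^ 2) - 2 * b * (x ^ 2 * exp (-b * x ^ 2))) x := by
    refine ((hasDerivAt_id' x).mul ((hasDerivAt_pow 2 x).const_mul (-b)).exp).congr_deriv ?_
    push_cast; ring
  have hsq := (integrable_sq_mul_exp_neg_mul_sq hb).const_mul (2 * b)
  have h := integral_eq_zero_of_hasDerivAt_of_integrable hderiv
    ((integrable_exp_neg_mul_sq hb).sub hsq) (integrable_mul_exp_neg_mul_sq hb)
  rw [integral_sub (integrable_exp_neg_mul_sq hb) hsq, integral_const_mul,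
    integral_gaussian] at h
  rw [eq_div_iff (by positivity)]
  linear_combination -h

noncomputable def gaussProd (α β : ℝ) (w : ℝ × ℝ) : ℝ := exp (-α * w.1 ^ 2) * exp (-β * w.2 ^ 2)

section gaussProd

variable {α β : ℝ}

theorem integral_gaussProd : ∫ w, gaussProd α β w = √(π / α) * √(π / β) := by
  rw [← integral_gaussian, ← integral_gaussian]
  exact integral_prod_mul (fun x => exp (-α * x ^ 2)) (fun y => exp (-β * y ^ 2))

theorem integral_gaussProd_mul_eq_zero_of_odd {f : ℝ × ℝ → ℝ} (hf : f.Odd) :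
    ∫ w, gaussProd α β w * f w = 0 :=
  integral_eq_zero_of_odd volume fun w => by simp [gaussProd, hf w]

theorem integral_gaussProd_mul_sq_linear (hα : 0 < α) (hβ : 0 < β) (u v : ℝ) :
    ∫ w, gaussProd α β w * (u * w.1 + v * w.2) ^ 2 =
      (u ^ 2 / (2 * α) + v ^ 2 / (2 * β)) * ∫ w, gaussProd α β w := by
  have h20 := ((integrable_sq_mul_exp_neg_mul_sq hα).mul_prod
    (integrable_exp_neg_mul_sq hβ)).const_mul (u ^ 2)
  have h11 := ((integrable_mul_exp_neg_mul_sq hα).mul_prod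
    (integrable_mul_exp_neg_mul_sq hβ)).const_mul (2 * u * v)
  have h02 := ((integrable_exp_neg_mul_sq hα).mul_prod
    (integrable_sq_mul_exp_neg_mul_sq hβ)).const_mul (v ^ 2)
  calc ∫ w, gaussProd α β w * (u * w.1 + v * w.2) ^ 2
      = ∫ w : ℝ × ℝ, u ^ 2 * (w.1 ^ 2 * exp (-α * w.1 ^ 2) * exp (-β * w.2 ^ 2))
          + 2 * u * v * (w.1 * exp (-α * w.1 ^ 2) * (w.2 * exp (-β * w.2 ^ 2)))
          + v ^ 2 * (exp (-α * w.1 ^ 2) * (w.2 ^ 2 * exp (-β * w.2 ^ 2))) := by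
        congr 1 with w; simp only [gaussProd]; ring
    _ = u ^ 2 * ((√(π / α) / (2 * α)) * √(π / β)) + 2 * u * v * (0 * 0)
          + v ^ 2 * (√(π / α) * (√(π / β) / (2 * β))) := by
        rw [Measure.volume_eq_prod, integral_add _ h02, integral_add h20 h11, integral_const_mul,
          integral_const_mul, integral_const_mul,
          integral_prod_mul (fun x => x ^ 2 * exp (-α * x ^ 2)) (fun y => exp (-β * y ^ 2)),
          integral_prod_mul (fun x => x * exp (-α * x ^ 2)) (fun y => y * exp (-β * y ^ 2)),
          integral_prod_mul (fun x => exp (-α * x ^ 2)) (fun y => y ^ 2 * exp (-β * y ^ 2)),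
          integral_sq_mul_exp_neg_mul_sq hα, integral_sq_mul_exp_neg_mul_sq hβ,
          integral_mul_exp_neg_mul_sq_eq_zero, integral_mul_exp_neg_mul_sq_eq_zero,
          integral_gaussian, integral_gaussian]
        exact h20.add h11
    _ = _ := by rw [integral_gaussProd]; ring

theorem integral_gaussProd_mul_sq_mul (hα : 0 < α) (hβ : 0 < β) (c : ℝ) :
    ∫ w, gaussProd α β w * (c * (w.1 * w.2)) ^ 2 =
      c ^ 2 / (4 * α * β) * ∫ w, gaussProd α β w := by
  calc ∫ w, gaussProd α β w * (c * (w.1 * w.2)) ^ 2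
      = ∫ w : ℝ × ℝ, c ^ 2 * (w.1 ^ 2 * exp (-α * w.1 ^ 2) * (w.2 ^ 2 * exp (-β * w.2 ^ 2))) := by
        congr 1 with w; simp only [gaussProd]; ring
    _ = c ^ 2 * ((√(π / α) / (2 * α)) * (√(π / β) / (2 * β))) := by
        rw [Measure.volume_eq_prod, integral_const_mul,
          integral_prod_mul (fun x => x ^ 2 * exp (-α * x ^ 2)) (fun y => y ^ 2 * exp (-β * y ^ 2)),
          integral_sq_mul_exp_neg_mul_sq hα, integral_sq_mul_exp_neg_mul_sq hβ]
    _ = _ := by rw [integral_gaussProd]; field_simp; ring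

end gaussProd

noncomputable def corrDensity (S r μx σ : ℝ) (z : ℝ × ℝ) : ℝ :=
  (1 / (2 * π * S ^ 2 * √(1 - r ^ 2))) *
    exp (-(1 / (2 * (1 - r ^ 2))) *
      ((z.1 - μx) ^ 2 / σ ^ 2 + z.2 ^ 2 * σ ^ 2 / S ^ 4 + 2 * r * (z.1 - μx) * z.2 / S ^ 2))

noncomputable def decorrelate (S μx σ : ℝ) (z : ℝ × ℝ) : ℝ × ℝ :=
  ((z.1 - μx) / σ + z.2 * σ / S ^ 2, (z.1 - μx) / σ - z.2 * σ / S ^ 2)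

section corrDensity

variable {S r σ : ℝ}

theorem corrDensity_pos (hS : S ≠ 0) (hr₁ : -1 < r) (hr₂ : r < 1) (μx : ℝ) (z : ℝ × ℝ) :
    0 < corrDensity S r μx σ z := by
  have hA : 0 < √(1 - r ^ 2) := sqrt_pos.2 (by nlinarith)
  unfold corrDensity
  positivity

theorem corrDensity_eq_gaussProd (hS : S ≠ 0) (hr₁ : -1 < r) (hr₂ : r < 1) (hσ : σ ≠ 0)
    (μx : ℝ) (z : ℝ × ℝ) :
    corrDensity S r μx σ z = 1 / (2 * π * S ^ 2 * √(1 - r ^ 2)) *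
      gaussProd (1 / (4 * (1 - r))) (1 / (4 * (1 + r))) (decorrelate S μx σ z) := by
  have h₁ : 1 - r ≠ 0 := by linarith
  have h₂ : 1 + r ≠ 0 := by linarith
  have h₃ : 1 - r ^ 2 ≠ 0 := by nlinarith
  rw [corrDensity, gaussProd, decorrelate, ← exp_add]
  congr 2
  field_simp
  ring

theorem integral_gaussProd_decorrelated (hr₁ : -1 < r) (hr₂ : r < 1) :
    ∫ w, gaussProd (1 / (4 * (1 - r))) (1 / (4 * (1 + r))) w = 4 * π * √(1 - r ^ 2) := by
  have h₁ : 0 ≤ 1 - r := by linarith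
  have h₂ : 0 ≤ 1 + r := by linarith
  rw [integral_gaussProd, div_div_eq_mul_div, div_div_eq_mul_div, div_one, div_one,
    ← sqrt_mul (by positivity), show π * (4 * (1 - r)) * (π * (4 * (1 + r))) =
      (4 * π) ^ 2 * (1 - r ^ 2) by ring, sqrt_mul (by positivity), sqrt_sq (by positivity)]

theorem integral_comp_decorrelate (hS : S ≠ 0) (hσ : σ ≠ 0) (μx : ℝ) (F : ℝ × ℝ → ℝ) :
    ∫ z, F (decorrelate S μx σ z) = S ^ 2 / 2 * ∫ w, F w := by
  have hdet : σ⁻¹ * -(σ / S ^ 2) - σ / S ^ 2 * σ⁻¹ = -(2 / S ^ 2) := by field_simp; ring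
  have h := integral_comp_linear_prod F (a := σ⁻¹) (b := σ / S ^ 2) (c := σ⁻¹) (d := -(σ / S ^ 2))
    (by rw [hdet]; exact neg_ne_zero.2 (by positivity))
  rw [hdet, abs_neg, abs_of_pos (by positivity), inv_div, smul_eq_mul] at h
  rw [← h]
  conv_rhs => rw [← integral_sub_right_eq_self _ ((μx, 0) : ℝ × ℝ)]
  congr 1 with z
  simp only [decorrelate, Prod.fst_sub, Prod.snd_sub, sub_zero]
  congr 2 <;> ring

theorem integral_corrDensity_mul_comp_decorrelate (hS : S ≠ 0) (hr₁ : -1 < r) (hr₂ : r < 1)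
    (hσ : σ ≠ 0) (μx : ℝ) (F : ℝ × ℝ → ℝ) :
    ∫ z, corrDensity S r μx σ z * F (decorrelate S μx σ z) =
      (∫ w, gaussProd (1 / (4 * (1 - r))) (1 / (4 * (1 + r))) w * F w) /
        ∫ w, gaussProd (1 / (4 * (1 - r))) (1 / (4 * (1 + r))) w := by
  have hA : 0 < √(1 - r ^ 2) := sqrt_pos.2 (by nlinarith)
  simp_rw [corrDensity_eq_gaussProd hS hr₁ hr₂ hσ, mul_assoc]
  rw [integral_const_mul, integral_comp_decorrelate hS hσ μx
    (fun w => gaussProd (1 / (4 * (1 - r))) (1 / (4 * (1 + r))) w * F w),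
    integral_gaussProd_decorrelated hr₁ hr₂]
  field_simp
  ring

theorem log_corrDensity (hS : S ≠ 0) (hr₁ : -1 < r) (hr₂ : r < 1) (μx : ℝ) (z : ℝ × ℝ) :
    log (corrDensity S r μx σ z) = log (1 / (2 * π * S ^ 2 * √(1 - r ^ 2))) -
      ((z.1 - μx) ^ 2 / σ ^ 2 + z.2 ^ 2 * σ ^ 2 / S ^ 4 + 2 * r * (z.1 - μx) * z.2 / S ^ 2) /
        (2 * (1 - r ^ 2)) := by
  have hA : 0 < √(1 - r ^ 2) := sqrt_pos.2 (by nlinarith)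
  rw [corrDensity, log_mul (by positivity) (exp_ne_zero _), log_exp]
  ring

theorem deriv_log_corrDensity_mean (hS : S ≠ 0) (hr₁ : -1 < r) (hr₂ : r < 1) (hσ : σ ≠ 0)
    (μx : ℝ) (z : ℝ × ℝ) :
    deriv (fun t => log (corrDensity S r t σ z)) μx =
      (1 + r) / (2 * (1 - r ^ 2) * σ) * (decorrelate S μx σ z).1 +
        (1 - r) / (2 * (1 - r ^ 2) * σ) * (decorrelate S μx σ z).2 := by
  have hA : 1 - r ^ 2 ≠ 0 := by nlinarith
  have hdiff : HasDerivAt (fun t => z.1 - t) (-1) μx := (hasDerivAt_id' μx).const_sub z.1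
  simp_rw [log_corrDensity hS hr₁ hr₂]
  refine (((((hdiff.pow 2).div_const _).add_const _).add
    ((((hdiff.const_mul (2 * r)).mul_const z.2).div_const _))).div_const _
    |>.const_sub _).deriv.trans ?_
  simp only [decorrelate]
  field_simp
  ring

theorem deriv_log_corrDensity_scale (hS : S ≠ 0) (hr₁ : -1 < r) (hr₂ : r < 1) (hσ : σ ≠ 0)
    (μx : ℝ) (z : ℝ × ℝ) :
    deriv (fun t => log (corrDensity S r μx t z)) σ =
      1 / ((1 - r ^ 2) * σ) * ((decorrelate S μx σ z).1 * (decorrelate S μx σ z).2) := by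
  have hA : 1 - r ^ 2 ≠ 0 := by nlinarith
  have hsq : HasDerivAt (fun t => t ^ 2) (2 * σ) σ := by simpa using hasDerivAt_pow 2 σ
  simp_rw [log_corrDensity hS hr₁ hr₂]
  refine (((((hasDerivAt_const σ ((z.1 - μx) ^ 2)).div hsq (pow_ne_zero 2 hσ)).add
    ((hsq.const_mul _).div_const _)).add_const _).div_const _ |>.const_sub _).deriv.trans ?_
  simp only [decorrelate]
  field_simp
  ring

end corrDensity

/-- For the 2D correlated Gaussian model with fixed `S = Σ > 0` and
correlation coefficient `r ∈ (-1, 1)`,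
`p(x, y; μx, σ) = (1/(2πΣ²√(1-r²))) · exp(-(1/(2(1-r²)))[(x-μx)²/σ² + y²σ²/Σ⁴ + 2r(x-μx)y/Σ²])`,
`p(·,·; μx, σ)` is a probability density on `ℝ²`, and its Fisher information matrix
with respect to the parameters `(μx, σ)` is diagonal, with entries
`g_{μμ} = 1/((1-r²)σ²)`, `g_{σσ} = 4/((1-r²)σ²)` and `g_{μσ} = g_{σμ} = 0`;
that is, `g = (1/(1-r²)) diag(1/σ², 4/σ²)`. -/
theorem fisher_metric_2D_correlated_model
    (S r : ℝ) (hS : 0 < S) (hr₁ : -1 < r) (hr₂ : r < 1)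
    (p : ℝ → ℝ → ℝ × ℝ → ℝ)
    (hp : ∀ (μx σ : ℝ) (z : ℝ × ℝ), p μx σ z =
      (1 / (2 * Real.pi * S ^ 2 * Real.sqrt (1 - r ^ 2))) *
        Real.exp (-(1 / (2 * (1 - r ^ 2))) *
          ((z.1 - μx) ^ 2 / σ ^ 2 + z.2 ^ 2 * σ ^ 2 / S ^ 4 +
            2 * r * (z.1 - μx) * z.2 / S ^ 2)))
    (μx σ : ℝ) (hσ : 0 < σ) :
    (∀ z : ℝ × ℝ, 0 < p μx σ z) ∧
    (∫ z : ℝ × ℝ, p μx σ z = 1) ∧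
    (∫ z : ℝ × ℝ, p μx σ z * (deriv (fun t => Real.log (p t σ z)) μx) ^ 2 =
      1 / ((1 - r ^ 2) * σ ^ 2)) ∧
    (∫ z : ℝ × ℝ, p μx σ z * (deriv (fun t => Real.log (p μx t z)) σ) ^ 2 =
      4 / ((1 - r ^ 2) * σ ^ 2)) ∧
    (∫ z : ℝ × ℝ, p μx σ z *
        (deriv (fun t => Real.log (p t σ z)) μx *
          deriv (fun t => Real.log (p μx t z)) σ) = 0) := by
  obtain rfl : p = corrDensity S r := by
    funext μx σ z
    exact hp μx σ z
  have hr : 0 < 1 - r ^ 2 := by nlinarith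
  have hα : 0 < 1 / (4 * (1 - r)) := one_div_pos.2 (by linarith)
  have hβ : 0 < 1 / (4 * (1 + r)) := one_div_pos.2 (by linarith)
  have hG : ∫ w, gaussProd (1 / (4 * (1 - r))) (1 / (4 * (1 + r))) w ≠ 0 := by
    rw [integral_gaussProd_decorrelated hr₁ hr₂]
    positivity
  have hE := integral_corrDensity_mul_comp_decorrelate hS.ne' hr₁ hr₂ hσ.ne' μx
  simp_rw [deriv_log_corrDensity_mean hS.ne' hr₁ hr₂ hσ.ne',
    deriv_log_corrDensity_scale hS.ne' hr₁ hr₂ hσ.ne']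
  set u := (1 + r) / (2 * (1 - r ^ 2) * σ)
  set v := (1 - r) / (2 * (1 - r ^ 2) * σ)
  set c := 1 / ((1 - r ^ 2) * σ)
  refine ⟨corrDensity_pos hS.ne' hr₁ hr₂ μx, ?_, ?_, ?_, ?_⟩
  · simpa only [mul_one, div_self hG] using hE fun _ => 1
  · rw [hE fun w => (u * w.1 + v * w.2) ^ 2, integral_gaussProd_mul_sq_linear hα hβ,
      mul_div_cancel_right₀ _ hG]
    simp only [u, v]
    field_simp
    ring
  · rw [hE fun w => (c * (w.1 * w.2)) ^ 2, integral_gaussProd_mul_sq_mul hα hβ,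
      mul_div_cancel_right₀ _ hG]
    simp only [c]
    field_simp
    ring
  · have hodd : Function.Odd fun w : ℝ × ℝ => (u * w.1 + v * w.2) * (c * (w.1 * w.2)) :=
      fun w => by simp only [Prod.fst_neg, Prod.snd_neg]; ring
    rw [hE fun w => (u * w.1 + v * w.2) * (c * (w.1 * w.2)),
      integral_gaussProd_mul_eq_zero_of_odd hodd, zero_div]
end
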